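/- (Doublets from the form.) Let T be an MHV collection on {1,…,n} with f_T ≠ 0. Then for all distinct i, j ∈ {1,…,n}, the exponent v_{ij}(f_T) of the irreducible polynomial ⟨ij⟩ in f_T is odd if and only if {i,j} ∈ D(T). -/

import Mathlib

open MvPolynomial

/-- The polynomial ring `ℚ[X_{m,i} : m ∈ {1,2}, 1 ≤ i ≤ n]` in `2n` indeterminates. -/
abbrev MHV.Poly (n : ℕ) := MvPolynomial (Fin 2 × Fin n) ℚ

/-- The field of fractions `ℚ(X)`. -/
abbrev MHV.FF (n : ℕ) := FractionRing (MHV.Poly n)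

namespace MHV

variable {n : ℕ}

/-- The bracket `⟨ij⟩ = X_{1,i}·X_{2,j} − X_{1,j}·X_{2,i}`. -/
noncomputable def bra (i j : Fin n) : Poly n :=
  X ((0 : Fin 2), i) * X ((1 : Fin 2), j) - X ((0 : Fin 2), j) * X ((1 : Fin 2), i)

/-- A triplet: an ordered triple of indices. -/
abbrev Triplet (n : ℕ) := Fin n × Fin n × Fin n

/-- The entries of a triplet are pairwise distinct. -/
def Triplet.Distinct (t : Triplet n) : Prop :=
  t.1 ≠ t.2.1 ∧ t.1 ≠ t.2.2 ∧ t.2.1 ≠ t.2.2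

/-- The set of indices used by a triplet. -/
def Triplet.indices (t : Triplet n) : Finset (Fin n) := {t.1, t.2.1, t.2.2}

/-- A triplet on the index set `I`: pairwise distinct entries, all belonging to `I`. -/
def Triplet.OnSet (I : Finset (Fin n)) (t : Triplet n) : Prop :=
  t.Distinct ∧ t.indices ⊆ I

/-- The row of the matrix `M(S)` corresponding to the triplet `t = (a,b,c)`:
entry `⟨bc⟩` in column `a`, `⟨ca⟩` in column `b`, `⟨ab⟩` in column `c`, `0` elsewhere. -/
noncomputable def rowEntry (t : Triplet n) (c : Fin n) : Poly n :=
  if c = t.1 then bra t.2.1 t.2.2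
  else if c = t.2.1 then bra t.2.2 t.1
  else if c = t.2.2 then bra t.1 t.2.1
  else 0

/-- The determinant of the matrix whose rows are indexed by the triplets of `S` and
whose columns are the columns of `M(S)` belonging to `cols` (in increasing order). -/
noncomputable def detCols (S : List (Triplet n)) (cols : Finset (Fin n)) : Poly n :=
  Matrix.det (Matrix.of fun r c : Fin S.length =>
    ((cols.sort (· ≤ ·))[c.1]?).elim 0 (rowEntry (S.get r)))

/-- The determinant of `M_{ab}(S)`: the matrix `M(S)` (columns indexed by `I`)
with columns `a` and `b` deleted. -/
noncomputable def Mdet (S : List (Triplet n)) (I : Finset (Fin n)) (a b : Fin n) : Poly n :=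
  detCols S ((I.erase a).erase b)

/-- The product `∏_{(a,b,c) ∈ S} ⟨ab⟩·⟨bc⟩·⟨ca⟩`. -/
noncomputable def denom (S : List (Triplet n)) : Poly n :=
  (S.map fun t => bra t.1 t.2.1 * bra t.2.1 t.2.2 * bra t.2.2 t.1).prod

/-- The canonical map from the polynomial ring to its field of fractions. -/
noncomputable def toFF : Poly n →+* FF n := algebraMap (Poly n) (FF n)

/-- The form `f_S = det(M_{ab}(S))² / (⟨ab⟩² · ∏_{(a,b,c) ∈ S} ⟨ab⟩⟨bc⟩⟨ca⟩)`,
where `(a,b)` is the pair of the two smallest elements of `I`. -/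
noncomputable def fForm (S : List (Triplet n)) (I : Finset (Fin n)) : FF n :=
  if h : 2 ≤ I.card then
    have h1 : I.Nonempty := Finset.card_pos.mp (by omega)
    have h2 : (I.erase (I.min' h1)).Nonempty := by
      rw [← Finset.card_pos, Finset.card_erase_of_mem (I.min'_mem h1)]; omega
    toFF (Mdet S I (I.min' h1) ((I.erase (I.min' h1)).min' h2)) ^ 2 /
      (toFF (bra (I.min' h1) ((I.erase (I.min' h1)).min' h2)) ^ 2 * toFF (denom S))
  else 0

/-- The set of all indices used by the triplets of `S`. -/
def indexSet (S : List (Triplet n)) : Finset (Fin n) :=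
  S.foldr (fun t acc => t.indices ∪ acc) ∅

/-- The non-vanishing condition: every nonempty subcollection consisting of `d` triplets
contains at least `d+2` distinct indices in total. -/
def NonVanishing (T : List (Triplet n)) : Prop :=
  ∀ S : List (Triplet n), S.Sublist T → S ≠ [] → S.length + 2 ≤ (indexSet S).card

/-- An MHV collection on `{1,…,n}`: a list of `n−2` triplets with pairwise
distinct entries (triplets on the full index set). -/
def IsMHV (n : ℕ) (T : List (Triplet n)) : Prop :=
  T.length = n - 2 ∧ ∀ t ∈ T, t.Distinct

/-- The unordered pair `{i,j}` belongs to the doublet set `D(T)`: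
`i` and `j` occur together in an odd number of triplets of `T`. -/
def InDoublets (T : List (Triplet n)) (i j : Fin n) : Prop :=
  Odd (T.countP fun t => decide (i ∈ t.indices ∧ j ∈ t.indices))

end MHV

namespace MHV

variable {n : ℕ}

lemma X_not_dvd {σ : Type*} [DecidableEq σ] {a b : σ} (h : a ≠ b) :
    ¬ (X a : MvPolynomial σ ℚ) ∣ X b := by
  rintro ⟨c, hc⟩
  have := congrArg (eval (fun s => if s = b then (1:ℚ) else 0)) hc
  simp [h] at this

lemma prime_X' {σ : Type*} [DecidableEq σ] (s : σ) :
    Prime (X s : MvPolynomial σ ℚ) := by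
  classical
  set e : Option {w : σ // w ≠ s} ≃ σ := Equiv.optionSubtypeNe s with he
  set E : MvPolynomial σ ℚ ≃ₐ[ℚ] Polynomial (MvPolynomial {w : σ // w ≠ s} ℚ) :=
    ((renameEquiv ℚ e).symm.trans (optionEquivLeft ℚ _)) with hE
  rw [← MulEquiv.prime_iff E.toMulEquiv]
  have hnone : (Equiv.optionSubtypeNe s).symm s = none := Equiv.optionSubtypeNe_symm_self s
  have : E.toMulEquiv (X s) = Polynomial.X := by
    show E (X s) = _
    simp [hE, he, renameEquiv_symm, hnone, optionEquivLeft_X_none]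
  rw [this]
  exact Polynomial.prime_X

lemma bra_prime {n : ℕ} {i j : Fin n} (hij : i ≠ j) : Prime (bra i j) := by
  classical
  set v0 : Fin 2 × Fin n := ((0:Fin 2), i) with hv0
  set S := {w : Fin 2 × Fin n // w ≠ v0} with hS
  set e : Option S ≃ (Fin 2 × Fin n) := Equiv.optionSubtypeNe v0 with he
  set E : Poly n ≃ₐ[ℚ] Polynomial (MvPolynomial S ℚ) :=
    ((renameEquiv ℚ e).symm.trans (optionEquivLeft ℚ S)) with hEdef
  rw [← MulEquiv.prime_iff E.toMulEquiv]
  have h1j : ((1:Fin 2), j) ≠ v0 := by simp [hv0]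
  have h0j : ((0:Fin 2), j) ≠ v0 := by simp [hv0, hij.symm]
  have h1i : ((1:Fin 2), i) ≠ v0 := by simp [hv0]
  set a1 : MvPolynomial S ℚ := X ⟨((1:Fin 2), j), h1j⟩ with ha1
  set a2 : MvPolynomial S ℚ := X ⟨((0:Fin 2), j), h0j⟩ with ha2
  set a3 : MvPolynomial S ℚ := X ⟨((1:Fin 2), i), h1i⟩ with ha3
  have hE : E.toMulEquiv (bra i j) =
      Polynomial.C a1 * Polynomial.X - Polynomial.C (a2 * a3) := by
    have hnone : (Equiv.optionSubtypeNe v0).symm ((0:Fin 2), i) = none :=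
      Equiv.optionSubtypeNe_symm_self v0
    show E (bra i j) = _
    simp only [bra, hnone, hEdef, AlgEquiv.trans_apply, map_sub, map_mul, renameEquiv_symm,
      renameEquiv_apply, rename_X, he, Equiv.optionSubtypeNe_symm_self,
      Equiv.optionSubtypeNe_symm_of_ne h1j, Equiv.optionSubtypeNe_symm_of_ne h0j,
      Equiv.optionSubtypeNe_symm_of_ne h1i,
      optionEquivLeft_X_some, optionEquivLeft_X_none]
    ring
  rw [hE]
  set q : Polynomial (MvPolynomial S ℚ) :=
    Polynomial.C a1 * Polynomial.X - Polynomial.C (a2 * a3) with hq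
  have hX12 : (⟨((1:Fin 2), j), h1j⟩ : S) ≠ ⟨((0:Fin 2), j), h0j⟩ := by
    simp
  have hX13 : (⟨((1:Fin 2), j), h1j⟩ : S) ≠ ⟨((1:Fin 2), i), h1i⟩ := by
    simp [hij.symm]
  have hprim : q.IsPrimitive := by
    intro r hr
    rw [Polynomial.C_dvd_iff_dvd_coeff] at hr
    have hc1 : r ∣ a1 := by
      have := hr 1
      simpa [hq, Polynomial.coeff_C] using this
    have hc0 : r ∣ a2 * a3 := by
      have := hr 0
      simpa [hq, Polynomial.coeff_C] using (dvd_neg.mpr this)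
    obtain ⟨s', hs⟩ := hc1
    rcases (prime_X' (⟨((1:Fin 2), j), h1j⟩ : S)).irreducible.isUnit_or_isUnit hs with hu | hu
    · exact hu
    · exfalso
      obtain ⟨u, rfl⟩ := hu
      have hra : a1 ∣ r := ⟨↑u⁻¹, by rw [hs, mul_assoc, u.mul_inv, mul_one]⟩
      rcases (prime_X' (⟨((1:Fin 2), j), h1j⟩ : S)).2.2 a2 a3 (hra.trans hc0) with h | h
      · exact X_not_dvd hX12 h
      · exact X_not_dvd hX13 h
  -- now irreducibility over the fraction field
  set K := FractionRing (MvPolynomial S ℚ) with hK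
  have hinj : Function.Injective (algebraMap (MvPolynomial S ℚ) K) :=
    IsFractionRing.injective (MvPolynomial S ℚ) K
  have ha1K : algebraMap (MvPolynomial S ℚ) K a1 ≠ 0 := fun h => by
    have := hinj (h.trans (map_zero _).symm)
    rw [ha1] at this
    exact MvPolynomial.X_ne_zero _ this
  have hdeg : (q.map (algebraMap (MvPolynomial S ℚ) K)).degree = 1 := by
    rw [hq]
    simp only [Polynomial.map_sub, Polynomial.map_mul, Polynomial.map_C, Polynomial.map_X]
    rw [Polynomial.degree_sub_eq_left_of_degree_lt]
    · exact Polynomial.degree_C_mul_X ha1K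
    · rw [Polynomial.degree_C_mul_X ha1K]
      exact lt_of_le_of_lt (Polynomial.degree_C_le) (by norm_num)
  have hirr : Irreducible q :=
    hprim.irreducible_of_irreducible_map_of_injective hinj
      (Polynomial.irreducible_of_degree_eq_one hdeg)
  exact (UniqueFactorizationMonoid.irreducible_iff_prime).mp hirr

lemma bra_ne_zero {i j : Fin n} (hij : i ≠ j) : bra i j ≠ 0 :=
  (bra_prime hij).ne_zero

lemma bra_swap (i j : Fin n) : bra j i = - bra i j := by
  rw [bra, bra]; ring

lemma not_dvd_bra {i j a b : Fin n} (hij : i ≠ j) (hab : a ≠ b)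
    (h : ¬((a = i ∧ b = j) ∨ (a = j ∧ b = i))) : ¬ bra i j ∣ bra a b := by
  classical
  -- choose c ∈ {a, b} with c ∉ {i, j}
  obtain ⟨c, hc, hci, hcj⟩ : ∃ c, (c = a ∨ c = b) ∧ c ≠ i ∧ c ≠ j := by
    by_cases hai : a = i
    · subst hai
      exact ⟨b, Or.inr rfl, fun hb => hab hb.symm, fun hb => h (Or.inl ⟨rfl, hb⟩)⟩
    · by_cases haj : a = j
      · subst haj
        exact ⟨b, Or.inr rfl, fun hb => h (Or.inr ⟨rfl, hb⟩), fun hb => hab hb.symm⟩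
      · exact ⟨a, Or.inl rfl, hai, haj⟩
  rintro ⟨g, hg⟩
  set v : Fin 2 × Fin n → ℚ :=
    fun p => if p.2 = c then (if p.1 = 0 then 0 else 1)
             else (if p.1 = 0 then 1 else 0) with hv
  have hvc0 : v ((0 : Fin 2), c) = 0 := by simp [hv]
  have hvc1 : v ((1 : Fin 2), c) = 1 := by simp [hv]
  have hvo0 : ∀ x : Fin n, x ≠ c → v ((0 : Fin 2), x) = 1 := by
    intro x hx; simp [hv, hx]
  have hvo1 : ∀ x : Fin n, x ≠ c → v ((1 : Fin 2), x) = 0 := by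
    intro x hx; simp [hv, hx]
  have hij0 : eval v (bra i j) = 0 := by
    simp [bra, hvo0 i (fun hh => hci hh.symm), hvo0 j (fun hh => hcj hh.symm),
      hvo1 i (fun hh => hci hh.symm), hvo1 j (fun hh => hcj hh.symm)]
  have hab1 : eval v (bra a b) ≠ 0 := by
    rcases hc with rfl | rfl
    · -- c = a ; b ≠ c
      have hbc : b ≠ c := fun hh => hab hh.symm
      simp [bra, hvc0, hvc1, hvo0 b hbc, hvo1 b hbc]
    · -- c = b ; a ≠ c
      have hac : a ≠ c := hab
      simp [bra, hvc0, hvc1, hvo0 a hac, hvo1 a hac]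
  apply hab1
  rw [hg, map_mul, hij0, zero_mul]

lemma mult_bra_bra {i j a b : Fin n} (hij : i ≠ j) (hab : a ≠ b) :
    multiplicity (bra i j) (bra a b)
      = if (a = i ∧ b = j) ∨ (a = j ∧ b = i) then 1 else 0 := by
  split_ifs with h
  · obtain ⟨h1, h2⟩ | ⟨h1, h2⟩ := h
    · rw [h1, h2]; exact multiplicity_self
    · rw [h1, h2, bra_swap i j, multiplicity_neg]; exact multiplicity_self
  · exact multiplicity_eq_zero.mpr (not_dvd_bra hij hab h)

lemma denom_nil : denom ([] : List (Triplet n)) = 1 := by simp [denom]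

lemma denom_cons (t : Triplet n) (T : List (Triplet n)) :
    denom (t :: T) = (bra t.1 t.2.1 * bra t.2.1 t.2.2 * bra t.2.2 t.1) * denom T := by
  simp [denom]

lemma tripleProd_ne_zero {t : Triplet n} (ht : t.Distinct) :
    bra t.1 t.2.1 * bra t.2.1 t.2.2 * bra t.2.2 t.1 ≠ 0 := by
  obtain ⟨h1, h2, h3⟩ := ht
  exact mul_ne_zero (mul_ne_zero (bra_ne_zero h1) (bra_ne_zero h3))
    (bra_ne_zero (Ne.symm h2))

lemma denom_ne_zero {T : List (Triplet n)} (hT : ∀ t ∈ T, t.Distinct) :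
    denom T ≠ 0 := by
  induction T with
  | nil => simp [denom_nil]
  | cons t T ih =>
    rw [denom_cons]
    exact mul_ne_zero (tripleProd_ne_zero (hT t List.mem_cons_self))
      (ih fun s hs => hT s (List.mem_cons_of_mem t hs))

lemma mult_triple {i j : Fin n} (hij : i ≠ j) {t : Triplet n} (ht : t.Distinct) :
    multiplicity (bra i j) (bra t.1 t.2.1 * bra t.2.1 t.2.2 * bra t.2.2 t.1)
      = if i ∈ t.indices ∧ j ∈ t.indices then 1 else 0 := by
  obtain ⟨x, y, z⟩ := t
  obtain ⟨h1, h2, h3⟩ := ht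
  have hp := bra_prime hij
  have hne : bra x y * bra y z * bra z x ≠ 0 :=
    tripleProd_ne_zero (t := (x, y, z)) ⟨h1, h2, h3⟩
  have hfin : FiniteMultiplicity (bra i j) (bra x y * bra y z * bra z x) :=
    FiniteMultiplicity.of_prime_left hp hne
  rw [multiplicity_mul hp hfin, multiplicity_mul hp hfin.mul_left,
    mult_bra_bra hij h1, mult_bra_bra hij h3, mult_bra_bra hij (Ne.symm h2)]
  simp only [Triplet.indices, Finset.mem_insert, Finset.mem_singleton]
  by_cases e1 : x = i <;> by_cases e2 : y = i <;> by_cases e3 : z = i <;>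
    by_cases e4 : x = j <;> by_cases e5 : y = j <;> by_cases e6 : z = j <;>
    simp_all [eq_comm]

lemma mult_denom {i j : Fin n} (hij : i ≠ j) (T : List (Triplet n))
    (hT : ∀ t ∈ T, t.Distinct) :
    multiplicity (bra i j) (denom T)
      = T.countP (fun t => decide (i ∈ t.indices ∧ j ∈ t.indices)) := by
  induction T with
  | nil =>
    rw [denom_nil, List.countP_nil]
    exact multiplicity_eq_zero.mpr (bra_prime hij).not_dvd_one
  | cons t T ih =>
    have ht := hT t List.mem_cons_self
    have hT' : ∀ s ∈ T, s.Distinct := fun s hs => hT s (List.mem_cons_of_mem t hs)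
    have hfin : FiniteMultiplicity (bra i j)
        ((bra t.1 t.2.1 * bra t.2.1 t.2.2 * bra t.2.2 t.1) * denom T) :=
      FiniteMultiplicity.of_prime_left (bra_prime hij)
        (mul_ne_zero (tripleProd_ne_zero ht) (denom_ne_zero hT'))
    rw [denom_cons, multiplicity_mul (bra_prime hij) hfin, mult_triple hij ht, ih hT',
      List.countP_cons]
    by_cases h : i ∈ t.indices ∧ j ∈ t.indices <;> simp [h] <;> omega

lemma toFF_injective : Function.Injective (toFF (n := n)) :=
  IsFractionRing.injective (Poly n) (FF n)

lemma toFF_ne_zero {p : Poly n} (hp : p ≠ 0) : toFF p ≠ 0 := fun h =>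
  hp (toFF_injective (h.trans (map_zero _).symm))

end MHV

/-- doublets from the form: for an MHV collection `T` with `f_T ≠ 0` and
distinct `i, j`, the exponent `v_{ij}(f_T)` of the irreducible polynomial `⟨ij⟩` in `f_T`
(computed as the difference of multiplicities in any representation `f_T = P/Q`)
is odd if and only if `{i,j} ∈ D(T)`. -/
theorem statement7 {n : ℕ} (hn : 3 ≤ n) (T : List (MHV.Triplet n))
    (hMHV : MHV.IsMHV n T) (hf : MHV.fForm T Finset.univ ≠ 0)
    (i j : Fin n) (hij : i ≠ j) :
    ∀ P Q : MHV.Poly n, P ≠ 0 → Q ≠ 0 →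
      MHV.fForm T Finset.univ = MHV.toFF P / MHV.toFF Q →
      (Odd ((multiplicity (MHV.bra i j) P : ℤ) - (multiplicity (MHV.bra i j) Q : ℤ)) ↔
        MHV.InDoublets T i j) := by
  classical
  intro P Q hP hQ hPQ
  have hcard : 2 ≤ (Finset.univ : Finset (Fin n)).card := by
    simp only [Finset.card_univ, Fintype.card_fin]; omega
  obtain ⟨a, b, hab⟩ : ∃ a b : MHV.Poly n, MHV.fForm T Finset.univ =
      MHV.toFF a ^ 2 / (MHV.toFF b ^ 2 * MHV.toFF (MHV.denom T)) :=
    ⟨_, _, by rw [MHV.fForm, dif_pos hcard]⟩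
  have hden : MHV.toFF b ^ 2 * MHV.toFF (MHV.denom T) ≠ 0 := fun h =>
    hf (by rw [hab, h, div_zero])
  have hb' : MHV.toFF b ≠ 0 := fun h => hden (by rw [h]; ring)
  have ha' : MHV.toFF a ≠ 0 := fun h => hf (by rw [hab, h]; simp)
  have ha0 : a ≠ 0 := fun h => ha' (by rw [h, map_zero])
  have hb0 : b ≠ 0 := fun h => hb' (by rw [h, map_zero])
  have hd0 : MHV.denom T ≠ 0 := MHV.denom_ne_zero hMHV.2
  have heq : MHV.toFF P / MHV.toFF Q =
      MHV.toFF a ^ 2 / (MHV.toFF b ^ 2 * MHV.toFF (MHV.denom T)) := hPQ.symm.trans hab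
  have hcross := (div_eq_div_iff (MHV.toFF_ne_zero hQ) hden).mp heq
  have hpoly : P * (b ^ 2 * MHV.denom T) = a ^ 2 * Q :=
    MHV.toFF_injective (by rw [map_mul, map_mul, map_mul, map_pow, map_pow]; exact hcross)
  have hp := MHV.bra_prime hij
  have hfinL : FiniteMultiplicity (MHV.bra i j) (P * (b ^ 2 * MHV.denom T)) :=
    FiniteMultiplicity.of_prime_left hp
      (mul_ne_zero hP (mul_ne_zero (pow_ne_zero 2 hb0) hd0))
  have hfinR : FiniteMultiplicity (MHV.bra i j) (a ^ 2 * Q) := hpoly ▸ hfinL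
  have eL : multiplicity (MHV.bra i j) (P * (b ^ 2 * MHV.denom T)) =
      multiplicity (MHV.bra i j) P +
        (2 * multiplicity (MHV.bra i j) b + multiplicity (MHV.bra i j) (MHV.denom T)) := by
    rw [multiplicity_mul hp hfinL, multiplicity_mul hp hfinL.mul_right,
      (FiniteMultiplicity.of_prime_left hp hb0).multiplicity_pow hp]
  have eR : multiplicity (MHV.bra i j) (a ^ 2 * Q) =
      2 * multiplicity (MHV.bra i j) a + multiplicity (MHV.bra i j) Q := by
    rw [multiplicity_mul hp hfinR,
      (FiniteMultiplicity.of_prime_left hp ha0).multiplicity_pow hp]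
  have hNat : multiplicity (MHV.bra i j) P +
      (2 * multiplicity (MHV.bra i j) b + multiplicity (MHV.bra i j) (MHV.denom T)) =
      2 * multiplicity (MHV.bra i j) a + multiplicity (MHV.bra i j) Q := by
    rw [← eL, ← eR, hpoly]
  have hdcount := MHV.mult_denom hij T hMHV.2
  rw [MHV.InDoublets, ← hdcount, Nat.odd_iff, Int.odd_iff]
  omega
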